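/- arXiv:2605.12472 — 5 statements merged into one kernel-verified Lean document; each statement's English description precedes it below -/
import Mathlib

section
/- Let X be a random variable taking values in (0,1) such that the conditional expectations are well defined. Then for any y with 1 ≤ y ≤ n-1, E[X/(1-X)] · E[(1-X)/X] ≥ 1 for any probability distribution of X on (0,1); consequently, if q_y = C(n,y) ∫ x^y (1-x)^{n-y} dP_X(x) is the output pmf of the binomial channel, then q_{y+1} q_{y-1} / q_y² ≥ y(n-y)/((y+1)(n-y+1)). -/
/-!
Both inequalities are instances of Cauchy–Schwarz in the form `(∫ f)² ≤ ∫ g * ∫ h` whenever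
`f² ≤ g h` and `g, h ≥ 0`, which is the nonpositivity of the discriminant of the nonnegative
quadratic `t ↦ ∫ (g t² - 2 f t + h)`. With `f = 1`, `g = x/(1-x)`, `h = (1-x)/x` this is the
first claim. For the second, the moments `m_y = ∫ x^y (1-x)^(n-y)` satisfy
`m_y² ≤ m_{y+1} m_{y-1}` because the integrands already satisfy it with equality, and the binomial
coefficients contribute exactly the factor `y(n-y)/((y+1)(n-y+1))`.
-/

open Real MeasureTheory

section CauchySchwarz

variable {α : Type*} [MeasurableSpace α] {μ : Measure α}

theorem sq_integral_le_integral_mul_integral {f g h : α → ℝ} (hf : Integrable f μ)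
    (hg : Integrable g μ) (hh : Integrable h μ) (hg0 : 0 ≤ᵐ[μ] g) (hh0 : 0 ≤ᵐ[μ] h)
    (hfgh : ∀ᵐ x ∂μ, f x ^ 2 ≤ g x * h x) :
    (∫ x, f x ∂μ) ^ 2 ≤ (∫ x, g x ∂μ) * ∫ x, h x ∂μ := by
  have hquad : ∀ t : ℝ,
      0 ≤ (∫ x, g x ∂μ) * (t * t) + (-2 * ∫ x, f x ∂μ) * t + ∫ x, h x ∂μ := by
    intro t
    have hpt : ∀ᵐ x ∂μ, 0 ≤ g x * (t * t) + -2 * f x * t + h x := by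
      filter_upwards [hg0, hh0, hfgh] with x (hgx : 0 ≤ g x) (hhx : 0 ≤ h x) hfx
      rcases hgx.eq_or_lt with hg' | hg'
      · have : f x = 0 := by nlinarith
        simp [← hg', this, hhx]
      · by_contra! hneg
        nlinarith [sq_nonneg (t * g x - f x), mul_neg_of_pos_of_neg hg' hneg]
    have := integral_nonneg_of_ae hpt
    rwa [integral_add, integral_add, integral_mul_const, integral_mul_const, integral_const_mul]
      at this
    all_goals fun_prop
  have := discrim_le_zero hquad
  rw [discrim] at this
  linarith

theorem one_le_integral_mul_integral_inv [IsProbabilityMeasure μ] {u : α → ℝ}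
    (hu : Integrable u μ) (hu_inv : Integrable (fun x => (u x)⁻¹) μ) (hu0 : ∀ᵐ x ∂μ, 0 < u x) :
    1 ≤ (∫ x, u x ∂μ) * ∫ x, (u x)⁻¹ ∂μ := by
  simpa using sq_integral_le_integral_mul_integral (integrable_const 1) hu hu_inv
    (hu0.mono fun _ h => h.le) (hu0.mono fun _ h => (inv_pos.2 h).le)
    (hu0.mono fun x h => by simp [h.ne'])

end CauchySchwarz

theorem Continuous.integrable_of_ae_mem_Icc {μ : Measure ℝ} [IsFiniteMeasure μ] {f : ℝ → ℝ}
    (hf : Continuous f) {a b : ℝ} (hμ : ∀ᵐ x ∂μ, x ∈ Set.Icc a b) : Integrable f μ := by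
  rw [← Measure.restrict_eq_self_of_ae_mem hμ]
  exact hf.integrableOn_Icc

theorem sq_integral_pow_mul_pow_le {μ : Measure ℝ} [IsFiniteMeasure μ]
    (hμ : ∀ᵐ x ∂μ, x ∈ Set.Icc (0 : ℝ) 1) (k l : ℕ) :
    (∫ x, x ^ (k + 1) * (1 - x) ^ (l + 1) ∂μ) ^ 2 ≤
      (∫ x, x ^ (k + 2) * (1 - x) ^ l ∂μ) * ∫ x, x ^ k * (1 - x) ^ (l + 2) ∂μ := by
  have hint (i j : ℕ) : Integrable (fun x : ℝ => x ^ i * (1 - x) ^ j) μ :=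
    Continuous.integrable_of_ae_mem_Icc (by fun_prop) hμ
  have hnonneg (i j : ℕ) : 0 ≤ᵐ[μ] fun x : ℝ => x ^ i * (1 - x) ^ j :=
    hμ.mono fun x ⟨hx0, hx1⟩ => mul_nonneg (pow_nonneg hx0 _) (pow_nonneg (sub_nonneg.2 hx1) _)
  exact sq_integral_le_integral_mul_integral (hint _ _) (hint _ _) (hint _ _) (hnonneg _ _)
    (hnonneg _ _) (Filter.Eventually.of_forall fun x => le_of_eq (by ring))

theorem choose_add_two_mul_choose_mul (k l : ℕ) :
    (k + l + 2).choose (k + 2) * (k + l + 2).choose k * ((k + 2) * (l + 2)) =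
      (k + l + 2).choose (k + 1) ^ 2 * ((k + 1) * (l + 1)) := by
  have h₁ := Nat.choose_succ_right_eq (k + l + 2) (k + 1)
  have h₀ := Nat.choose_succ_right_eq (k + l + 2) k
  rw [show k + l + 2 - (k + 1) = l + 1 by omega] at h₁
  rw [show k + l + 2 - k = l + 2 by omega] at h₀
  calc _ = (k + l + 2).choose (k + 1 + 1) * (k + 1 + 1) * ((k + l + 2).choose k * (l + 2)) := by
        ring
    _ = _ := by rw [h₁, ← h₀]; ring

noncomputable def binomialOutput (μ : Measure ℝ) (n y : ℕ) : ℝ :=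
  n.choose y * ∫ x, x ^ y * (1 - x) ^ (n - y) ∂μ

theorem sq_binomialOutput_mul_le {μ : Measure ℝ} [IsFiniteMeasure μ]
    (hμ : ∀ᵐ x ∂μ, x ∈ Set.Icc (0 : ℝ) 1) (k l : ℕ) :
    binomialOutput μ (k + l + 2) (k + 1) ^ 2 * ((k + 1) * (l + 1)) ≤
      binomialOutput μ (k + l + 2) (k + 2) * binomialOutput μ (k + l + 2) k *
        ((k + 2) * (l + 2)) := by
  have hchoose : ((k + l + 2).choose (k + 2) : ℝ) * (k + l + 2).choose k * ((k + 2) * (l + 2)) =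
      (k + l + 2).choose (k + 1) ^ 2 * ((k + 1) * (l + 1)) := by
    exact_mod_cast choose_add_two_mul_choose_mul k l
  have hmoment := mul_le_mul_of_nonneg_left (sq_integral_pow_mul_pow_le hμ k l)
    (by positivity : (0 : ℝ) ≤ (k + l + 2).choose (k + 1) ^ 2 * ((k + 1) * (l + 1)))
  simp only [binomialOutput, show k + l + 2 - (k + 2) = l by omega,
    show k + l + 2 - (k + 1) = l + 1 by omega, show k + l + 2 - k = l + 2 by omega]
  linear_combination -(∫ x, x ^ (k + 2) * (1 - x) ^ l ∂μ) *
    (∫ x, x ^ k * (1 - x) ^ (l + 2) ∂μ) * hchoose + hmoment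

theorem binomial_output_log_convexity_general (n : ℕ)
    (μ : Measure ℝ) [IsProbabilityMeasure μ]
    (hsupp : μ (Set.Ioo (0 : ℝ) 1)ᶜ = 0)
    (h1 : Integrable (fun x => x / (1 - x)) μ)
    (h2 : Integrable (fun x => (1 - x) / x) μ)
    (q : ℕ → ℝ)
    (hq : ∀ y, q y = (n.choose y : ℝ) * ∫ x, x ^ y * (1 - x) ^ (n - y) ∂μ)
    (y : ℕ) (hy1 : 1 ≤ y) (hy2 : y ≤ n - 1) (hqy : 0 < q y) :
    (∫ x, x / (1 - x) ∂μ) * (∫ x, (1 - x) / x ∂μ) ≥ 1 ∧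
    q (y + 1) * q (y - 1) / (q y) ^ 2 ≥
      (y : ℝ) * ((n : ℝ) - y) / (((y : ℝ) + 1) * ((n : ℝ) - y + 1)) := by
  have hIoo : ∀ᵐ x ∂μ, x ∈ Set.Ioo (0 : ℝ) 1 := mem_ae_iff.2 hsupp
  refine ⟨?_, ?_⟩
  · have h2' : Integrable (fun x => (x / (1 - x))⁻¹) μ := by simpa only [inv_div] using h2
    simpa only [inv_div] using one_le_integral_mul_integral_inv h1 h2'
      (hIoo.mono fun x ⟨hx0, hx1⟩ => div_pos hx0 (sub_pos.2 hx1))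
  obtain rfl : q = binomialOutput μ n := funext hq
  obtain ⟨k, rfl⟩ : ∃ k, y = k + 1 := ⟨y - 1, by omega⟩
  obtain ⟨l, rfl⟩ : ∃ l, n = k + l + 2 := ⟨n - k - 2, by omega⟩
  rw [show ((k + l + 2 : ℕ) : ℝ) - (k + 1 : ℕ) = l + 1 by push_cast; ring, Nat.add_sub_cancel,
    ge_iff_le, div_le_div_iff₀ (by positivity) (pow_pos hqy 2)]
  push_cast
  linarith [sq_binomialOutput_mul_le (hIoo.mono fun _ => And.imp le_of_lt le_of_lt) k l]

theorem binomial_output_log_convexity (n : ℕ) (hn : 2 ≤ n)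
    (μ : Measure ℝ) [IsProbabilityMeasure μ]
    (hsupp : μ (Set.Ioo (0 : ℝ) 1)ᶜ = 0)
    (h1 : Integrable (fun x => x / (1 - x)) μ)
    (h2 : Integrable (fun x => (1 - x) / x) μ)
    (q : ℕ → ℝ)
    (hq : ∀ y, q y = (n.choose y : ℝ) * ∫ x, x ^ y * (1 - x) ^ (n - y) ∂μ)
    (y : ℕ) (hy1 : 1 ≤ y) (hy2 : y ≤ n - 1) (hqy : 0 < q y) :
    (∫ x, x / (1 - x) ∂μ) * (∫ x, (1 - x) / x ∂μ) ≥ 1 ∧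
    q (y + 1) * q (y - 1) / (q y) ^ 2 ≥
      (y : ℝ) * ((n : ℝ) - y) / (((y : ℝ) + 1) * ((n : ℝ) - y + 1)) :=
  binomial_output_log_convexity_general n μ hsupp h1 h2 q hq y hy1 hy2 hqy
end

section
/- For every integer n ≥ 2, the Beta-binomial(1/2,1/2) distribution places mass at least 1/(6π) on the central interval: ∑_{y=⌈n/3⌉}^{⌊2n/3⌋} Γ(y+1/2)Γ(n-y+1/2)/(π Γ(y+1)Γ(n-y+1)) ≥ 1/(6π). -/
/-!
Log-convexity of `Γ` gives `Γ(s + 1/2) ≤ √s Γ(s)`, so by AM-GM every term of the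
Beta-binomial(1/2, 1/2) distribution is at least `2 / (π (n + 1))`. The central interval
`⌈n/3⌉ ≤ y ≤ ⌊2n/3⌋` has at least `(n - 1)/3` points, and `2 (n - 1) / (3 π (n + 1)) ≥ 1 / (6 π)`
once `n ≥ 2`.
-/

open Real Finset

theorem Real.Gamma_add_half_le_sqrt_mul_Gamma {s : ℝ} (hs : 0 < s) :
    Gamma (s + 1 / 2) ≤ √s * Gamma s := by
  have hΓ : 0 < Gamma s := Gamma_pos_of_pos hs
  have hconv := Gamma_mul_add_mul_le_rpow_Gamma_mul_rpow_Gamma hs (hs.trans (lt_add_one s))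
    one_half_pos one_half_pos (add_halves 1)
  rw [Gamma_add_one hs.ne', mul_rpow hs.le hΓ.le] at hconv
  calc Gamma (s + 1 / 2) = Gamma (1 / 2 * s + 1 / 2 * (s + 1)) := by ring_nf
    _ ≤ Gamma s ^ (1 / 2 : ℝ) * (s ^ (1 / 2 : ℝ) * Gamma s ^ (1 / 2 : ℝ)) := hconv
    _ = √s * Gamma s := by
      rw [sqrt_eq_rpow, mul_left_comm, ← rpow_add hΓ, add_halves, rpow_one]

theorem Real.two_div_add_le_Gamma_mul_Gamma_div {a b : ℝ} (ha : 0 < a) (hb : 0 < b) :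
    2 / (a + b) ≤ Gamma a * Gamma b / (Gamma (a + 1 / 2) * Gamma (b + 1 / 2)) := by
  have hΓa := Gamma_add_half_le_sqrt_mul_Gamma ha
  have hΓb := Gamma_add_half_le_sqrt_mul_Gamma hb
  have hpos : 0 < Gamma a * Gamma b := mul_pos (Gamma_pos_of_pos ha) (Gamma_pos_of_pos hb)
  have hamgm : 2 * (√a * √b) ≤ a + b := by
    nlinarith [sq_nonneg (√a - √b), sq_sqrt ha.le, sq_sqrt hb.le]
  rw [div_le_div_iff₀ (by positivity)
    (mul_pos (Gamma_pos_of_pos (by positivity)) (Gamma_pos_of_pos (by positivity)))]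
  calc 2 * (Gamma (a + 1 / 2) * Gamma (b + 1 / 2))
      ≤ 2 * (√a * Gamma a * (√b * Gamma b)) := by
        gcongr
    _ = 2 * (√a * √b) * (Gamma a * Gamma b) := by ring
    _ ≤ Gamma a * Gamma b * (a + b) := by nlinarith

noncomputable def betaBinomialHalf (n y : ℕ) : ℝ :=
  Gamma ((y : ℝ) + 1/2) * Gamma ((n : ℝ) - y + 1/2) /
    (π * Gamma ((y : ℝ) + 1) * Gamma ((n : ℝ) - y + 1))

theorem two_div_pi_mul_le_betaBinomialHalf {n y : ℕ} (hy : y ≤ n) :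
    2 / (π * (n + 1)) ≤ betaBinomialHalf n y := by
  have hny : (0 : ℝ) ≤ n - y := sub_nonneg.mpr (Nat.cast_le.mpr hy)
  have hbound := two_div_add_le_Gamma_mul_Gamma_div (a := y + 1 / 2) (b := n - y + 1 / 2)
    (by positivity) (by positivity)
  have hsum : (y : ℝ) + 1 / 2 + (n - y + 1 / 2) = n + 1 := by ring
  rw [hsum, add_assoc, add_assoc, add_halves] at hbound
  calc 2 / (π * (n + 1)) = 2 / (n + 1) / π := by rw [div_div, mul_comm π]
    _ ≤ _ := div_le_div_of_nonneg_right hbound pi_pos.le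
    _ = betaBinomialHalf n y := by rw [betaBinomialHalf, div_div, mul_comm _ π, ← mul_assoc]

theorem sub_one_le_three_mul_card_Icc (n : ℕ) :
    n - 1 ≤ 3 * #(Icc ((n + 2) / 3) (2 * n / 3)) := by
  rw [Nat.card_Icc]
  omega

theorem betaBinomial_central_mass (n : ℕ) (hn : 2 ≤ n) :
    ∑ y ∈ Finset.Icc ((n + 2) / 3) (2 * n / 3),
      Real.Gamma ((y : ℝ) + 1/2) * Real.Gamma ((n : ℝ) - y + 1/2) /
        (π * Real.Gamma ((y : ℝ) + 1) * Real.Gamma ((n : ℝ) - y + 1)) ≥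
    1 / (6 * π) := by
  set s := Icc ((n + 2) / 3) (2 * n / 3)
  have hcard : ((n : ℝ) - 1) / 3 ≤ #s := by
    have hcardℕ : n - 1 ≤ 3 * #s := sub_one_le_three_mul_card_Icc n
    have : (n : ℝ) ≤ 3 * #s + 1 := by exact_mod_cast (by omega : n ≤ 3 * #s + 1)
    linarith
  have hn' : (2 : ℝ) ≤ n := by exact_mod_cast hn
  have hterm : ∀ y ∈ s, 2 / (π * (n + 1)) ≤ betaBinomialHalf n y := fun y hy ↦
    two_div_pi_mul_le_betaBinomialHalf ((mem_Icc.mp hy).2.trans (by omega))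
  calc 1 / (6 * π) ≤ ((n : ℝ) - 1) / 3 * (2 / (π * (n + 1))) := by
        rw [div_mul_div_comm, div_le_div_iff₀ (by positivity) (by positivity)]
        nlinarith [pi_pos]
    _ ≤ #s * (2 / (π * (n + 1))) := by gcongr
    _ ≤ ∑ y ∈ s, betaBinomialHalf n y := by
        simpa only [nsmul_eq_mul] using card_nsmul_le_sum s _ _ hterm
end

section
/- Let ε_0, ε_1, …, ε_{2L-2} be real numbers with ε_0 = 1, and suppose the L×L matrix M with entries M_{i,j} = (1/2)(ε_{i+j} + ε_{|i-j|}) (0 ≤ i,j ≤ L-1) has rank at most K where 1 ≤ K < L. Let D be the L×L diagonal matrix with D_{0,0}=1 and D_{i,i}=1/2 for 1 ≤ i ≤ L-1. Then ∑_{k=1}^{2L-2} ε_k² ≥ (L−K)/(4L). -/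
open Finset Module

lemma norm_sq_euclidean {n : ℕ} (x : EuclideanSpace ℝ (Fin n)) :
    ‖x‖ ^ 2 = ∑ i, x i ^ 2 := by
  rw [← real_inner_self_eq_norm_sq, PiLp.inner_apply]
  simp [RCLike.inner_apply, sq]

lemma toEuclideanLin_apply' {n : ℕ} (A : Matrix (Fin n) (Fin n) ℝ)
    (x : EuclideanSpace ℝ (Fin n)) (j : Fin n) :
    Matrix.toEuclideanLin A x j = ∑ k, A j k * x k := by
  rfl

lemma frob_basis_sum {n : ℕ} (A : Matrix (Fin n) (Fin n) ℝ) {ι : Type*} [Fintype ι]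
    (b : OrthonormalBasis ι ℝ (EuclideanSpace ℝ (Fin n))) :
    ∑ i, ‖Matrix.toEuclideanLin A (b i)‖ ^ 2 = ∑ j, ∑ k, (A j k) ^ 2 := by
  set w : Fin n → EuclideanSpace ℝ (Fin n) := fun j => (WithLp.equiv 2 _).symm (fun k => A j k) with hw
  have hinner : ∀ (j : Fin n) (x : EuclideanSpace ℝ (Fin n)),
      (inner ℝ (w j) x : ℝ) = ∑ k, A j k * x k := by
    intro j x
    rw [PiLp.inner_apply]
    simp [hw, RCLike.inner_apply, WithLp.equiv_symm_apply, mul_comm]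
  calc ∑ i, ‖Matrix.toEuclideanLin A (b i)‖ ^ 2
      = ∑ i, ∑ j, (inner ℝ (w j) (b i) : ℝ) * (inner ℝ (b i) (w j) : ℝ) := by
        refine Finset.sum_congr rfl fun i _ => ?_
        rw [norm_sq_euclidean]
        refine Finset.sum_congr rfl fun j _ => ?_
        rw [toEuclideanLin_apply' A (b i) j, ← hinner j (b i), sq, real_inner_comm]
    _ = ∑ j, (inner ℝ (w j) (w j) : ℝ) := by
        rw [Finset.sum_comm]
        exact Finset.sum_congr rfl fun j _ => b.sum_inner_mul_inner (w j) (w j)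
    _ = ∑ j, ∑ k, (A j k) ^ 2 := by
        refine Finset.sum_congr rfl fun j _ => ?_
        rw [hinner]
        simp [hw, WithLp.equiv_symm_apply, sq]

lemma frob_lower {n : ℕ} (A : Matrix (Fin n) (Fin n) ℝ)
    (W : Submodule ℝ (EuclideanSpace ℝ (Fin n)))
    (h : ∀ x ∈ W, ‖x‖ = 1 → (1:ℝ)/4 ≤ ‖Matrix.toEuclideanLin A x‖ ^ 2) :
    (finrank ℝ W : ℝ) / 4 ≤ ∑ j, ∑ k, (A j k) ^ 2 := by
  classical
  set d := finrank ℝ W with hd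
  set b₀ := stdOrthonormalBasis ℝ W
  set u : Fin d → EuclideanSpace ℝ (Fin n) := fun i => (b₀ i : EuclideanSpace ℝ (Fin n)) with hu
  have hon : Orthonormal ℝ u := b₀.orthonormal.comp_linearIsometry W.subtypeₗᵢ
  have hinj : Function.Injective u := hon.linearIndependent.injective
  have honset : Orthonormal ℝ (Subtype.val : Set.range u → EuclideanSpace ℝ (Fin n)) :=
    (orthonormal_subtype_range hinj).2 hon
  obtain ⟨ufin, b, hsub, hb⟩ := honset.exists_orthonormalBasis_extension
  have hfrob := frob_basis_sum A b
  have h1 : ∑ i, ‖Matrix.toEuclideanLin A (b i)‖ ^ 2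
      = ∑ x ∈ ufin, ‖Matrix.toEuclideanLin A x‖ ^ 2 := by
    rw [hb]
    exact Finset.sum_coe_sort ufin fun x => ‖Matrix.toEuclideanLin A x‖ ^ 2
  have himg : Finset.image u Finset.univ ⊆ ufin := by
    intro x hx
    simp only [Finset.mem_image] at hx
    obtain ⟨i, _, rfl⟩ := hx
    exact hsub ⟨i, rfl⟩
  have h2 : ∑ x ∈ Finset.image u Finset.univ, ‖Matrix.toEuclideanLin A x‖ ^ 2
      ≤ ∑ x ∈ ufin, ‖Matrix.toEuclideanLin A x‖ ^ 2 :=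
    Finset.sum_le_sum_of_subset_of_nonneg himg (fun x _ _ => sq_nonneg _)
  have h3 : ∑ x ∈ Finset.image u Finset.univ, ‖Matrix.toEuclideanLin A x‖ ^ 2
      = ∑ i : Fin d, ‖Matrix.toEuclideanLin A (u i)‖ ^ 2 :=
    Finset.sum_image (fun i _ j _ hij => hinj hij)
  have h4 : (d : ℝ) / 4 ≤ ∑ i : Fin d, ‖Matrix.toEuclideanLin A (u i)‖ ^ 2 := by
    have : ∀ i : Fin d, (1:ℝ)/4 ≤ ‖Matrix.toEuclideanLin A (u i)‖ ^ 2 := by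
      intro i
      refine h (u i) (b₀ i).2 ?_
      have := hon.1 i
      simpa using this
    calc (d : ℝ) / 4 = ∑ _i : Fin d, (1:ℝ)/4 := by simp [mul_comm]; ring
      _ ≤ _ := Finset.sum_le_sum fun i _ => this i
  linarith [h4, h3 ▸ h2, h1 ▸ hfrob]

lemma counting_upper (L : ℕ) (hL : 1 ≤ L) (f : ℕ → ℝ) (hf0 : f 0 = 0) (hf : ∀ k, 0 ≤ f k) :
    ((∑ p ∈ (range L ×ˢ range L), f (p.1 + p.2))
    + ∑ p ∈ (range L ×ˢ range L).filter (fun p => p.1 < p.2), f (p.2 - p.1))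
    + ∑ p ∈ (range L ×ˢ range L).filter (fun p => p.2 < p.1), f (p.1 - p.2)
    ≤ 2 * L * ∑ k ∈ Icc 1 (2*L-2), f k := by
  classical
  set P := range L ×ˢ range L with hP
  have key : ∀ (s : Finset (ℕ × ℕ)) (σ : ℕ × ℕ → ℕ), (∀ p ∈ s, σ p ≤ 2*L-2) →
      ∑ p ∈ s, f (σ p)
        = ∑ k ∈ Icc 0 (2*L-2), ((s.filter (fun p => σ p = k)).card : ℝ) * f k := by
    intro s σ hσ
    rw [← Finset.sum_fiberwise_of_maps_to (g := σ) (t := Icc 0 (2*L-2))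
      (fun p hp => by simp only [Finset.mem_Icc]; exact ⟨Nat.zero_le _, hσ p hp⟩) (fun p => f (σ p))]
    refine Finset.sum_congr rfl fun k hk => ?_
    have hc : ∀ p ∈ s.filter (fun p => σ p = k), f (σ p) = f k := fun p hp => by
      rw [(Finset.mem_filter.1 hp).2]
    rw [Finset.sum_congr rfl hc, Finset.sum_const, nsmul_eq_mul]
  have hA := key P (fun p => p.1 + p.2) (by
    intro p hp
    simp only [hP, Finset.mem_product, Finset.mem_range] at hp
    omega)
  have hB1 := key (P.filter (fun p => p.1 < p.2)) (fun p => p.2 - p.1) (by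
    intro p hp
    simp only [hP, Finset.mem_filter, Finset.mem_product, Finset.mem_range] at hp
    omega)
  have hB2 := key (P.filter (fun p => p.2 < p.1)) (fun p => p.1 - p.2) (by
    intro p hp
    simp only [hP, Finset.mem_filter, Finset.mem_product, Finset.mem_range] at hp
    omega)
  rw [hA, hB1, hB2, ← Finset.sum_add_distrib, ← Finset.sum_add_distrib]
  have hbound : ∀ k ∈ Icc 0 (2*L-2),
      ((P.filter (fun p => p.1 + p.2 = k)).card : ℝ) * f k
      + ((P.filter (fun p => p.1 < p.2)).filter (fun p => p.2 - p.1 = k)).card * f k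
      + ((P.filter (fun p => p.2 < p.1)).filter (fun p => p.1 - p.2 = k)).card * f k
      ≤ 2 * L * f k := by
    intro k hk
    rcases Nat.eq_zero_or_pos k with rfl | hk1
    · simp [hf0]
    have hA1 : (P.filter (fun p => p.1 + p.2 = k)).card ≤ k + 1 := by
      have := Finset.card_le_card_of_injOn (fun p => p.1)
        (s := P.filter (fun p => p.1 + p.2 = k)) (t := range (k+1))
        (fun p hp => by
          simp only [Finset.mem_coe, hP, Finset.mem_filter, Finset.mem_product, Finset.mem_range] at hp ⊢
          omega)
        (fun p hp q hq h1 => by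
          simp only [Finset.coe_filter, Set.mem_setOf_eq] at hp hq
          rcases p with ⟨a, b⟩; rcases q with ⟨c, d⟩
          simp only at h1
          have : b = d := by omega
          simp [h1, this])
      simpa using this
    have hA2 : (P.filter (fun p => p.1 + p.2 = k)).card ≤ L := by
      have := Finset.card_le_card_of_injOn (fun p => p.1)
        (s := P.filter (fun p => p.1 + p.2 = k)) (t := range L)
        (fun p hp => by
          simp only [Finset.mem_coe, hP, Finset.mem_filter, Finset.mem_product, Finset.mem_range] at hp ⊢
          omega)
        (fun p hp q hq h1 => by
          simp only [Finset.coe_filter, Set.mem_setOf_eq] at hp hq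
          rcases p with ⟨a, b⟩; rcases q with ⟨c, d⟩
          simp only at h1
          have : b = d := by omega
          simp [h1, this])
      simpa using this
    have hB1c : ((P.filter (fun p => p.1 < p.2)).filter (fun p => p.2 - p.1 = k)).card ≤ L - k := by
      have := Finset.card_le_card_of_injOn (fun p => p.1)
        (s := (P.filter (fun p => p.1 < p.2)).filter (fun p => p.2 - p.1 = k)) (t := range (L - k))
        (fun p hp => by
          simp only [Finset.mem_coe, hP, Finset.mem_filter, Finset.mem_product, Finset.mem_range] at hp ⊢
          omega)
        (fun p hp q hq h1 => by
          simp only [Finset.coe_filter, hP, Finset.mem_product, Finset.mem_range,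
            Set.mem_setOf_eq] at hp hq
          rcases p with ⟨a, b⟩; rcases q with ⟨c, d⟩
          simp only at h1
          have : b = d := by omega
          simp [h1, this])
      simpa using this
    have hB2c : ((P.filter (fun p => p.2 < p.1)).filter (fun p => p.1 - p.2 = k)).card ≤ L - k := by
      have := Finset.card_le_card_of_injOn (fun p => p.2)
        (s := (P.filter (fun p => p.2 < p.1)).filter (fun p => p.1 - p.2 = k)) (t := range (L - k))
        (fun p hp => by
          simp only [Finset.mem_coe, hP, Finset.mem_filter, Finset.mem_product, Finset.mem_range] at hp ⊢
          omega)
        (fun p hp q hq h1 => by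
          simp only [Finset.coe_filter, hP, Finset.mem_product, Finset.mem_range,
            Set.mem_setOf_eq] at hp hq
          rcases p with ⟨a, b⟩; rcases q with ⟨c, d⟩
          simp only at h1
          have : a = c := by omega
          simp [h1, this])
      simpa using this
    have htot : (P.filter (fun p => p.1 + p.2 = k)).card
        + ((P.filter (fun p => p.1 < p.2)).filter (fun p => p.2 - p.1 = k)).card
        + ((P.filter (fun p => p.2 < p.1)).filter (fun p => p.1 - p.2 = k)).card ≤ 2 * L := by
      omega
    calc _ = (((P.filter (fun p => p.1 + p.2 = k)).card
        + ((P.filter (fun p => p.1 < p.2)).filter (fun p => p.2 - p.1 = k)).card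
        + ((P.filter (fun p => p.2 < p.1)).filter (fun p => p.1 - p.2 = k)).card : ℕ) : ℝ) * f k := by
          push_cast; ring
      _ ≤ (2 * L : ℕ) * f k := mul_le_mul_of_nonneg_right (by exact_mod_cast htot) (hf k)
      _ = 2 * L * f k := by push_cast; ring
  calc ∑ k ∈ Icc 0 (2*L-2), _ ≤ ∑ k ∈ Icc 0 (2*L-2), 2 * (L:ℝ) * f k := Finset.sum_le_sum hbound
    _ = 2 * L * ∑ k ∈ Icc 0 (2*L-2), f k := by rw [Finset.mul_sum]
    _ = 2 * L * ∑ k ∈ Icc 1 (2*L-2), f k := by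
        congr 1
        refine (Finset.sum_subset (Finset.Icc_subset_Icc (Nat.zero_le 1) le_rfl) ?_).symm
        intro x hx hnx
        simp only [Finset.mem_Icc] at hx hnx
        have : x = 0 := by omega
        simp [this, hf0]

theorem moment_matrix_rank_bound (L K : ℕ) (hK1 : 1 ≤ K) (hKL : K < L)
    (ε : ℕ → ℝ) (hε0 : ε 0 = 1)
    (M : Matrix (Fin L) (Fin L) ℝ)
    (hM : ∀ i j : Fin L,
      M i j = (ε ((i : ℕ) + (j : ℕ)) + ε (((i : ℤ) - (j : ℤ)).natAbs)) / 2)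
    (hrank : M.rank ≤ K) :
    ∑ k ∈ Finset.Icc 1 (2 * L - 2), (ε k) ^ 2 ≥ ((L : ℝ) - K) / (4 * L) := by
  classical
  have hL : 1 ≤ L := le_of_lt (lt_of_le_of_lt hK1 hKL)
  have hM' : ∀ i j : Fin L,
      M i j = (ε ((i:ℕ) + (j:ℕ)) + ε ((((i:ℕ):ℤ) - ((j:ℕ):ℤ)).natAbs)) / 2 := hM
  set f : ℕ → ℝ := fun k => if k = 0 then 0 else ε k ^ 2 with hf
  have hf0 : f 0 = 0 := by simp [hf]
  have hfnn : ∀ k, 0 ≤ f k := by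
    intro k
    simp only [hf]
    split_ifs
    · exact le_rfl
    · exact sq_nonneg _
  set dvec : Fin L → ℝ := fun i => if (i : ℕ) = 0 then 1 else 1/2 with hdvec
  set D : Matrix (Fin L) (Fin L) ℝ := Matrix.diagonal dvec with hD
  set S : ℝ := ∑ k ∈ Finset.Icc 1 (2 * L - 2), (ε k) ^ 2 with hS
  -- ### Lower bound
  set W : Submodule ℝ (EuclideanSpace ℝ (Fin L)) :=
    LinearMap.ker (Matrix.toEuclideanLin M) with hW
  have hrk : M.rank = finrank ℝ (LinearMap.range (Matrix.toEuclideanLin M)) := by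
    rw [Matrix.toEuclideanLin_eq_toLin]
    exact Matrix.rank_eq_finrank_range_toLin M _ _
  have hrn := LinearMap.finrank_range_add_finrank_ker (Matrix.toEuclideanLin M)
  rw [finrank_euclideanSpace_fin] at hrn
  have hWrank : L ≤ finrank ℝ W + K := by
    have h1 : finrank ℝ (LinearMap.range (Matrix.toEuclideanLin M)) ≤ K := by
      rw [← hrk]; exact hrank
    have h2 : finrank ℝ W = finrank ℝ (LinearMap.ker (Matrix.toEuclideanLin M)) := by rw [hW]
    omega
  have hper : ∀ x ∈ W, ‖x‖ = 1 → (1:ℝ)/4 ≤ ‖Matrix.toEuclideanLin (M - D) x‖ ^ 2 := by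
    intro x hx hnx
    have hker : Matrix.toEuclideanLin M x = 0 := LinearMap.mem_ker.1 hx
    have hMD : Matrix.toEuclideanLin (M - D) x
        = Matrix.toEuclideanLin M x - Matrix.toEuclideanLin D x := by
      rw [map_sub]; rfl
    rw [hMD, hker, zero_sub, norm_neg]
    have hDx : ∀ j, Matrix.toEuclideanLin D x j = dvec j * x j := by
      intro j
      rw [toEuclideanLin_apply']
      rw [Finset.sum_eq_single j (fun k _ hk => by
        rw [hD, Matrix.diagonal_apply_ne' dvec hk, zero_mul]) (by simp)]
      rw [hD, Matrix.diagonal_apply_eq]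
    rw [norm_sq_euclidean]
    have hterm : ∀ j : Fin L, (1:ℝ)/4 * x j ^ 2 ≤ (Matrix.toEuclideanLin D x j) ^ 2 := by
      intro j
      rw [hDx j, hdvec]
      dsimp only
      split_ifs <;> nlinarith [sq_nonneg (x j)]
    calc (1:ℝ)/4 = 1/4 * ‖x‖ ^ 2 := by rw [hnx]; ring
      _ = ∑ j, 1/4 * x j ^ 2 := by rw [norm_sq_euclidean, Finset.mul_sum]
      _ ≤ _ := Finset.sum_le_sum fun j _ => hterm j
  have hlow : ((L : ℝ) - K) / 4 ≤ ∑ j, ∑ k, ((M - D) j k) ^ 2 := by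
    have hfl := frob_lower (M - D) W hper
    have hcast : ((L : ℝ) - K) ≤ (finrank ℝ W : ℝ) := by
      have : (L : ℝ) ≤ (finrank ℝ W : ℝ) + K := by exact_mod_cast hWrank
      linarith
    linarith
  -- ### Upper bound
  set h : ℕ → ℕ → ℝ := fun a b => (f (a + b) + f (((a:ℤ) - (b:ℤ)).natAbs)) / 2 with hh
  have hentry : ∀ i j : Fin L, ((M - D) i j) ^ 2 ≤ h (i : ℕ) (j : ℕ) := by
    intro i j
    rw [Matrix.sub_apply, hM' i j, hh]
    dsimp only
    by_cases hij : (i:ℕ) = (j:ℕ)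
    · have hij' : i = j := Fin.ext hij
      subst hij'
      have habs : ((((i:ℕ)):ℤ) - (((i:ℕ)):ℤ)).natAbs = 0 := by omega
      rw [habs]
      by_cases h0 : (i:ℕ) = 0
      · rw [hD, Matrix.diagonal_apply_eq, hdvec]
        simp only [h0, if_pos rfl, hε0, hf0]
        norm_num
      · rw [hD, Matrix.diagonal_apply_eq, hdvec]
        simp only [if_neg h0]
        rw [hε0, hf0]
        have hne : (i:ℕ) + (i:ℕ) ≠ 0 := by omega
        simp only [hf, if_neg hne]
        nlinarith [sq_nonneg (ε ((i:ℕ) + (i:ℕ)))]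
    · have hne : i ≠ j := fun hc => hij (by rw [hc])
      rw [hD, Matrix.diagonal_apply_ne dvec hne, sub_zero]
      have h1 : (i:ℕ) + (j:ℕ) ≠ 0 := by omega
      have h2 : ((((i:ℕ)):ℤ) - (((j:ℕ)):ℤ)).natAbs ≠ 0 := by omega
      simp only [hf, if_neg h1, if_neg h2]
      nlinarith [sq_nonneg (ε ((i:ℕ) + (j:ℕ)) - ε ((((i:ℕ):ℤ) - ((j:ℕ):ℤ)).natAbs))]
  set P : Finset (ℕ × ℕ) := range L ×ˢ range L with hP
  have hsum2 : ∑ i : Fin L, ∑ j : Fin L, h (i:ℕ) (j:ℕ) = ∑ p ∈ P, h p.1 p.2 := by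
    have hinner : ∀ a : ℕ, ∑ j : Fin L, h a (j:ℕ) = ∑ b ∈ range L, h a b :=
      fun a => Fin.sum_univ_eq_sum_range (h a) L
    calc ∑ i : Fin L, ∑ j : Fin L, h (i:ℕ) (j:ℕ)
        = ∑ i : Fin L, ∑ b ∈ range L, h (i:ℕ) b := Finset.sum_congr rfl fun i _ => hinner i
      _ = ∑ a ∈ range L, ∑ b ∈ range L, h a b :=
          Fin.sum_univ_eq_sum_range (fun a => ∑ b ∈ range L, h a b) L
      _ = ∑ p ∈ P, h p.1 p.2 :=
          (Finset.sum_product (range L) (range L) (fun p => h p.1 p.2)).symm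
  have hnat : ∀ a b : ℕ, (((a:ℤ) - (b:ℤ)).natAbs) = if a < b then b - a else a - b := by
    intro a b; split_ifs <;> omega
  have hsplit : ∑ p ∈ P, f (((p.1:ℤ) - (p.2:ℤ)).natAbs)
      = (∑ p ∈ P.filter (fun p => p.1 < p.2), f (p.2 - p.1))
      + ∑ p ∈ P.filter (fun p => p.2 < p.1), f (p.1 - p.2) := by
    rw [← Finset.sum_filter_add_sum_filter_not P (fun p => p.1 < p.2)
      (fun p => f (((p.1:ℤ) - (p.2:ℤ)).natAbs))]
    congr 1
    · refine Finset.sum_congr rfl fun p hp => ?_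
      rw [hnat, if_pos (Finset.mem_filter.1 hp).2]
    · rw [← Finset.sum_filter_add_sum_filter_not (P.filter (fun p => ¬ p.1 < p.2))
        (fun p => p.2 < p.1) (fun p => f (((p.1:ℤ) - (p.2:ℤ)).natAbs))]
      have hz : ∑ p ∈ (P.filter (fun p => ¬ p.1 < p.2)).filter (fun p => ¬ p.2 < p.1),
          f (((p.1:ℤ) - (p.2:ℤ)).natAbs) = 0 := by
        refine Finset.sum_eq_zero fun p hp => ?_
        simp only [Finset.mem_filter] at hp
        obtain ⟨⟨-, h1⟩, h2⟩ := hp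
        have he : (((p.1:ℤ) - (p.2:ℤ)).natAbs) = 0 := by omega
        rw [he, hf0]
      rw [hz, add_zero]
      have heq : (P.filter (fun p => ¬ p.1 < p.2)).filter (fun p => p.2 < p.1)
          = P.filter (fun p => p.2 < p.1) := by
        rw [Finset.filter_filter]
        refine Finset.filter_congr fun p _ => ?_
        constructor
        · rintro ⟨-, hgt⟩; exact hgt
        · intro hgt; exact ⟨by omega, hgt⟩
      rw [heq]
      refine Finset.sum_congr rfl fun p hp => ?_
      have hlt := (Finset.mem_filter.1 hp).2
      rw [hnat, if_neg (by omega)]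
  have h2 : ∑ p ∈ P, h p.1 p.2
      = ((∑ p ∈ P, f (p.1 + p.2))
        + ∑ p ∈ P.filter (fun p => p.1 < p.2), f (p.2 - p.1)
        + ∑ p ∈ P.filter (fun p => p.2 < p.1), f (p.1 - p.2)) / 2 := by
    simp only [hh]
    rw [← Finset.sum_div, Finset.sum_add_distrib, hsplit, add_assoc]
  have hupper1 : ∑ j, ∑ k, ((M - D) j k) ^ 2 ≤ ∑ p ∈ P, h p.1 p.2 := by
    rw [← hsum2]
    exact Finset.sum_le_sum fun i _ => Finset.sum_le_sum fun j _ => hentry i j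
  have h3 := counting_upper L hL f hf0 hfnn
  have hfS : ∑ k ∈ Finset.Icc 1 (2*L-2), f k = S := by
    rw [hS]
    refine Finset.sum_congr rfl fun k hk => ?_
    have hk0 : k ≠ 0 := by
      simp only [Finset.mem_Icc] at hk; omega
    simp [hf, hk0]
  rw [hfS] at h3
  rw [h2] at hupper1
  have hup : ∑ j, ∑ k, ((M - D) j k) ^ 2 ≤ (L:ℝ) * S := by linarith
  rw [ge_iff_le, div_le_iff₀ (by positivity : (0:ℝ) < 4 * L)]
  linarith
end

section
/- If X ~ Beta(1/2,1/2) and Y | X=x ~ Binomial(n,x), then E[ψ(Y + 1/2)] = ψ(n+1) − 2 log 2, where ψ is the digamma function. -/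
open Real

noncomputable def digamma (x : ℝ) : ℝ := deriv (fun t => Real.log (Real.Gamma t)) x

lemma Gamma_diffAt {x : ℝ} (hx : 0 < x) : DifferentiableAt ℝ Real.Gamma x :=
  Real.differentiableAt_Gamma fun m => ((neg_nonpos.mpr m.cast_nonneg).trans_lt hx).ne'

lemma digamma_eq {x : ℝ} (hx : 0 < x) : digamma x = deriv Real.Gamma x / Real.Gamma x := by
  unfold digamma
  exact deriv.log (Gamma_diffAt hx) (Real.Gamma_pos_of_pos hx).ne'

lemma hasDerivAt_Gamma' {x : ℝ} (hx : 0 < x) :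
    HasDerivAt Real.Gamma (Real.Gamma x * digamma x) x := by
  have hne : Real.Gamma x ≠ 0 := (Real.Gamma_pos_of_pos hx).ne'
  have h : Real.Gamma x * digamma x = deriv Real.Gamma x := by
    rw [digamma_eq hx]; field_simp
  rw [h]
  exact (Gamma_diffAt hx).hasDerivAt

lemma digamma_one : digamma 1 = -Real.eulerMascheroniConstant := by
  rw [digamma_eq one_pos, Real.hasDerivAt_Gamma_one.deriv, Real.Gamma_one, div_one]

lemma digamma_half : digamma (1/2) = -(Real.eulerMascheroniConstant + 2 * Real.log 2) := by
  have h2 : (0:ℝ) < 1/2 := by norm_num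
  rw [digamma_eq h2, Real.hasDerivAt_Gamma_one_half.deriv, Real.Gamma_one_half_eq]
  have : √π ≠ 0 := by positivity
  field_simp

lemma hasDerivAt_Gamma_comp (c : ℝ) {x : ℝ} (h : 0 < c + x) :
    HasDerivAt (fun a : ℝ => Real.Gamma (c + a)) (Real.Gamma (c + x) * digamma (c + x)) x := by
  have h2 := (hasDerivAt_Gamma' h).comp x ((hasDerivAt_id x).const_add c)
  simpa [Function.comp_def] using h2

/-- Beta-binomial normalization identity. -/
lemma beta_sum (b : ℝ) (hb : 0 < b) : ∀ (n : ℕ) (a : ℝ), 0 < a →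
    Real.Gamma (a + b) * ∑ y ∈ Finset.range (n+1),
      (n.choose y : ℝ) * Real.Gamma (y + a) * Real.Gamma ((n:ℝ) - y + b)
    = Real.Gamma a * Real.Gamma b * Real.Gamma ((n:ℝ) + a + b) := by
  intro n
  induction n with
  | zero =>
    intro a ha
    simp only [Finset.range_one, Finset.sum_singleton, Nat.choose_self, Nat.cast_one,
      Nat.cast_zero]
    norm_num
    ring
  | succ n ih =>
    intro a ha
    have hab : 0 < a + b := by linarith
    have key : ∑ y ∈ Finset.range (n+2),
        ((n+1).choose y : ℝ) * Real.Gamma (y + a) * Real.Gamma ((↑(n+1):ℝ) - y + b)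
        = ((n:ℝ) + a + b) * ∑ y ∈ Finset.range (n+1),
          (n.choose y : ℝ) * Real.Gamma (y + a) * Real.Gamma ((n:ℝ) - y + b) := by
      have e1 : ∑ y ∈ Finset.range (n+2),
          ((n+1).choose y : ℝ) * Real.Gamma (y + a) * Real.Gamma ((↑(n+1):ℝ) - y + b)
          = (∑ y ∈ Finset.range (n+1),
              ((n+1).choose (y+1) : ℝ) * Real.Gamma (↑(y+1) + a) * Real.Gamma ((↑(n+1):ℝ) - ↑(y+1) + b))
            + ((n+1).choose 0 : ℝ) * Real.Gamma ((0:ℕ) + a) * Real.Gamma ((↑(n+1):ℝ) - (0:ℕ) + b) :=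
        Finset.sum_range_succ' _ (n+1)
      have e2 : ∀ y ∈ Finset.range (n+1),
          ((n+1).choose (y+1) : ℝ) * Real.Gamma (↑(y+1) + a) * Real.Gamma ((↑(n+1):ℝ) - ↑(y+1) + b)
          = (n.choose y : ℝ) * Real.Gamma (↑(y+1) + a) * Real.Gamma ((↑(n+1):ℝ) - ↑(y+1) + b)
            + (n.choose (y+1) : ℝ) * Real.Gamma (↑(y+1) + a) * Real.Gamma ((↑(n+1):ℝ) - ↑(y+1) + b) := by
        intro y hy
        rw [Nat.choose_succ_succ]
        push_cast
        ring
      have e3 : ∑ y ∈ Finset.range (n+1),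
          ((n+1).choose (y+1) : ℝ) * Real.Gamma (↑(y+1) + a) * Real.Gamma ((↑(n+1):ℝ) - ↑(y+1) + b)
          = (∑ y ∈ Finset.range (n+1),
              (n.choose y : ℝ) * Real.Gamma (↑(y+1) + a) * Real.Gamma ((↑(n+1):ℝ) - ↑(y+1) + b))
            + ∑ y ∈ Finset.range (n+1),
              (n.choose (y+1) : ℝ) * Real.Gamma (↑(y+1) + a) * Real.Gamma ((↑(n+1):ℝ) - ↑(y+1) + b) := by
        rw [Finset.sum_congr rfl e2, Finset.sum_add_distrib]
      have e4 : (∑ y ∈ Finset.range (n+1),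
            (n.choose (y+1) : ℝ) * Real.Gamma (↑(y+1) + a) * Real.Gamma ((↑(n+1):ℝ) - ↑(y+1) + b))
          + (n.choose 0 : ℝ) * Real.Gamma ((0:ℕ) + a) * Real.Gamma ((↑(n+1):ℝ) - (0:ℕ) + b)
          = ∑ y ∈ Finset.range (n+2),
            (n.choose y : ℝ) * Real.Gamma (y + a) * Real.Gamma ((↑(n+1):ℝ) - y + b) :=
        (Finset.sum_range_succ' (fun y => (n.choose y : ℝ) * Real.Gamma (y + a) *
          Real.Gamma ((↑(n+1):ℝ) - y + b)) (n+1)).symm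
      have e5 : ∑ y ∈ Finset.range (n+2),
          (n.choose y : ℝ) * Real.Gamma (y + a) * Real.Gamma ((↑(n+1):ℝ) - y + b)
          = ∑ y ∈ Finset.range (n+1),
            (n.choose y : ℝ) * Real.Gamma (y + a) * Real.Gamma ((↑(n+1):ℝ) - y + b) := by
        rw [Finset.sum_range_succ, Nat.choose_succ_self]
        simp
      have e6 : ((n+1).choose 0 : ℝ) = (n.choose 0 : ℝ) := by simp
      have e7 : ∀ y ∈ Finset.range (n+1),
          (n.choose y : ℝ) * Real.Gamma (↑(y+1) + a) * Real.Gamma ((↑(n+1):ℝ) - ↑(y+1) + b)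
            + (n.choose y : ℝ) * Real.Gamma (y + a) * Real.Gamma ((↑(n+1):ℝ) - y + b)
          = ((n:ℝ) + a + b) *
            ((n.choose y : ℝ) * Real.Gamma (y + a) * Real.Gamma ((n:ℝ) - y + b)) := by
        intro y hy
        have hy' : y ≤ n := Nat.lt_succ_iff.mp (Finset.mem_range.mp hy)
        have hya : (0:ℝ) < (y:ℝ) + a := by positivity
        have hnyb : (0:ℝ) < (n:ℝ) - y + b := by
          have : (y:ℝ) ≤ n := Nat.cast_le.mpr hy'
          linarith
        have h1 : Real.Gamma (↑(y+1) + a) = ((y:ℝ) + a) * Real.Gamma (y + a) := by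
          have h : (↑(y+1) : ℝ) + a = ((y:ℝ) + a) + 1 := by push_cast; ring
          rw [h, Real.Gamma_add_one hya.ne']
        have h2 : Real.Gamma ((↑(n+1):ℝ) - y + b) = ((n:ℝ) - y + b) * Real.Gamma ((n:ℝ) - y + b) := by
          have h : (↑(n+1) : ℝ) - y + b = ((n:ℝ) - y + b) + 1 := by push_cast; ring
          rw [h, Real.Gamma_add_one hnyb.ne']
        have h3 : (↑(n+1) : ℝ) - ↑(y+1) + b = (n:ℝ) - y + b := by push_cast; ring
        rw [h1, h2, h3]
        ring
      have e8 : (∑ y ∈ Finset.range (n+1),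
            (n.choose y : ℝ) * Real.Gamma (↑(y+1) + a) * Real.Gamma ((↑(n+1):ℝ) - ↑(y+1) + b))
          + ∑ y ∈ Finset.range (n+1),
            (n.choose y : ℝ) * Real.Gamma (y + a) * Real.Gamma ((↑(n+1):ℝ) - y + b)
          = ((n:ℝ) + a + b) * ∑ y ∈ Finset.range (n+1),
            (n.choose y : ℝ) * Real.Gamma (y + a) * Real.Gamma ((n:ℝ) - y + b) := by
        rw [← Finset.sum_add_distrib, Finset.sum_congr rfl e7, ← Finset.mul_sum]
      rw [e1, e3, e6]
      linarith [e4, e5, e8]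
    rw [key, ← mul_assoc, mul_comm (Real.Gamma (a+b)) _, mul_assoc, ih a ha]
    have hnab : ((n:ℝ) + a + b) ≠ 0 := by positivity
    have : (↑(n+1) : ℝ) + a + b = ((n:ℝ) + a + b) + 1 := by push_cast; ring
    rw [this, Real.Gamma_add_one hnab]
    ring

theorem betaBinomial_digamma_identity (n : ℕ) (hn : 1 ≤ n) :
    ∑ y ∈ Finset.range (n + 1),
        (Real.Gamma ((y : ℝ) + 1/2) * Real.Gamma ((n : ℝ) - y + 1/2) /
          (π * Real.Gamma ((y : ℝ) + 1) * Real.Gamma ((n : ℝ) - y + 1))) *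
        digamma ((y : ℝ) + 1/2) =
    digamma ((n : ℝ) + 1) - 2 * Real.log 2 := by
  have h2 : (0:ℝ) < 1/2 := by norm_num
  have hπ : (0:ℝ) < π := pi_pos
  have hΓn : (0:ℝ) < Real.Gamma ((n:ℝ) + 1) := Real.Gamma_pos_of_pos (by positivity)
  -- derivative of the sum
  have hGy : ∀ y : ℕ, HasDerivAt (fun a : ℝ => Real.Gamma (↑y + a))
      (Real.Gamma (↑y + 1/2) * digamma (↑y + 1/2)) (1/2) := by
    intro y
    have hp : (0:ℝ) < (y:ℝ) + 1/2 := by positivity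
    have h := (hasDerivAt_Gamma' hp).comp (1/2 : ℝ) ((hasDerivAt_id (1/2:ℝ)).const_add (y:ℝ))
    simpa [Function.comp_def] using h
  have hS : HasDerivAt (fun a : ℝ => ∑ y ∈ Finset.range (n+1),
        (n.choose y : ℝ) * Real.Gamma (↑y + a) * Real.Gamma ((n:ℝ) - ↑y + 1/2))
      (∑ y ∈ Finset.range (n+1),
        (n.choose y : ℝ) * (Real.Gamma (↑y + 1/2) * digamma (↑y + 1/2)) *
          Real.Gamma ((n:ℝ) - ↑y + 1/2)) (1/2) := by
    apply HasDerivAt.fun_sum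
    intro y hy
    exact ((hGy y).const_mul _).mul_const _
  set T := ∑ y ∈ Finset.range (n+1),
      (n.choose y : ℝ) * (Real.Gamma (↑y + 1/2) * digamma (↑y + 1/2)) *
        Real.Gamma ((n:ℝ) - ↑y + 1/2) with hTdef
  -- derivative of a ↦ Γ(a + 1/2)
  have hΓshift : HasDerivAt (fun a : ℝ => Real.Gamma (a + 1/2))
      (Real.Gamma (1/2 + 1/2) * digamma (1/2 + 1/2)) (1/2) := by
    have hp : (0:ℝ) < 1/2 + 1/2 := by norm_num
    have h := hasDerivAt_Gamma_comp (1/2 : ℝ) (x := 1/2) hp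
    refine h.congr_of_eventuallyEq (Filter.Eventually.of_forall fun a => ?_)
    exact congrArg Real.Gamma (add_comm a (1/2))
  -- derivative of a ↦ Γ(n + a + 1/2)
  have hΓn2 : HasDerivAt (fun a : ℝ => Real.Gamma ((n:ℝ) + a + 1/2))
      (Real.Gamma ((n:ℝ) + 1/2 + 1/2) * digamma ((n:ℝ) + 1/2 + 1/2)) (1/2) := by
    have hp : (0:ℝ) < ((n:ℝ) + 1/2) + 1/2 := by positivity
    have h := hasDerivAt_Gamma_comp ((n:ℝ) + 1/2) (x := 1/2) hp
    refine h.congr_of_eventuallyEq (Filter.Eventually.of_forall fun a => ?_)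
    exact congrArg Real.Gamma (by ring)
  have hL := hΓshift.mul hS
  have hR := ((hasDerivAt_Gamma' h2).mul_const (Real.Gamma (1/2))).mul hΓn2
  have heq : (fun a : ℝ => Real.Gamma (a + 1/2) * ∑ y ∈ Finset.range (n+1),
        (n.choose y : ℝ) * Real.Gamma (↑y + a) * Real.Gamma ((n:ℝ) - ↑y + 1/2))
      =ᶠ[nhds (1/2 : ℝ)] (fun a : ℝ =>
        Real.Gamma a * Real.Gamma (1/2) * Real.Gamma ((n:ℝ) + a + 1/2)) := by
    filter_upwards [eventually_gt_nhds h2] with a ha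
    exact beta_sum (1/2) h2 n a ha
  have hmain := hL.unique (hR.congr_of_eventuallyEq heq)
  -- value of the sum at 1/2
  have hSval : Real.Gamma (1/2 + 1/2) * ∑ y ∈ Finset.range (n+1),
      (n.choose y : ℝ) * Real.Gamma (↑y + 1/2) * Real.Gamma ((n:ℝ) - ↑y + 1/2)
      = Real.Gamma (1/2) * Real.Gamma (1/2) * Real.Gamma ((n:ℝ) + 1/2 + 1/2) :=
    beta_sum (1/2) h2 n (1/2) h2
  have hhalf : (1/2 + 1/2 : ℝ) = 1 := by norm_num
  have hn1 : ((n:ℝ) + 1/2 + 1/2) = (n:ℝ) + 1 := by ring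
  rw [hhalf, hn1] at hmain hSval
  rw [Real.Gamma_one, Real.Gamma_one_half_eq] at hmain hSval
  have hsqrt : √π * √π = π := Real.mul_self_sqrt hπ.le
  rw [digamma_one] at hmain
  rw [digamma_half] at hmain
  -- extract the value of T
  have hT : T = π * Real.Gamma ((n:ℝ) + 1) * (digamma ((n:ℝ) + 1) - 2 * Real.log 2) := by
    have hS2 : ∑ y ∈ Finset.range (n+1),
        (n.choose y : ℝ) * Real.Gamma (↑y + 1/2) * Real.Gamma ((n:ℝ) - ↑y + 1/2)
        = π * Real.Gamma ((n:ℝ) + 1) := by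
      rw [one_mul] at hSval
      rw [hSval, hsqrt]
    rw [hS2] at hmain
    linear_combination hmain + (Real.Gamma ((n:ℝ)+1) *
      (digamma ((n:ℝ)+1) - Real.eulerMascheroniConstant - 2*Real.log 2)) * hsqrt
  -- rewrite each term of the goal sum
  have hterm : ∀ y ∈ Finset.range (n+1),
      (Real.Gamma ((y : ℝ) + 1/2) * Real.Gamma ((n : ℝ) - y + 1/2) /
        (π * Real.Gamma ((y : ℝ) + 1) * Real.Gamma ((n : ℝ) - y + 1))) *
        digamma ((y : ℝ) + 1/2)
      = ((n.choose y : ℝ) * (Real.Gamma (↑y + 1/2) * digamma (↑y + 1/2)) *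
          Real.Gamma ((n:ℝ) - ↑y + 1/2)) / (π * Real.Gamma ((n:ℝ) + 1)) := by
    intro y hy
    have hy' : y ≤ n := Nat.lt_succ_iff.mp (Finset.mem_range.mp hy)
    have hcast : ((n:ℝ) - y) = ((n - y : ℕ) : ℝ) := by
      rw [Nat.cast_sub hy']
    have hg1 : Real.Gamma ((y:ℝ) + 1) = (y.factorial : ℝ) := Real.Gamma_nat_eq_factorial y
    have hg2 : Real.Gamma ((n:ℝ) - y + 1) = ((n - y).factorial : ℝ) := by
      rw [hcast]; exact Real.Gamma_nat_eq_factorial (n - y)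
    have hg3 : Real.Gamma ((n:ℝ) + 1) = (n.factorial : ℝ) := Real.Gamma_nat_eq_factorial n
    have hfac : (n.choose y : ℝ) * (y.factorial : ℝ) * ((n - y).factorial : ℝ)
        = (n.factorial : ℝ) := by
      exact_mod_cast congrArg (Nat.cast (R := ℝ)) (Nat.choose_mul_factorial_mul_factorial hy')
    have hy0 : (y.factorial : ℝ) ≠ 0 := Nat.cast_ne_zero.mpr y.factorial_ne_zero
    have hny0 : ((n - y).factorial : ℝ) ≠ 0 := Nat.cast_ne_zero.mpr (n - y).factorial_ne_zero
    have hn0 : (n.factorial : ℝ) ≠ 0 := Nat.cast_ne_zero.mpr n.factorial_ne_zero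
    rw [hg1, hg2, hg3]
    have hd1 : (π * (y.factorial:ℝ) * ((n - y).factorial:ℝ)) ≠ 0 := by positivity
    have hd2 : (π * (n.factorial:ℝ)) ≠ 0 := by positivity
    rw [div_mul_eq_mul_div, div_eq_div_iff hd1 hd2]
    linear_combination (Real.Gamma ((y:ℝ) + 1/2) * Real.Gamma ((n:ℝ) - ↑y + 1/2) *
      digamma ((y:ℝ) + 1/2) * π) * hfac.symm
  rw [Finset.sum_congr rfl hterm, ← Finset.sum_div, ← hTdef, hT]
  field_simp
end

section
/- For all a, b > 0, ∫₀^{π/2} log(a + b sin²t) dt = π log((√a + √(a+b))/2). -/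
open Real intervalIntegral
open MeasureTheory Filter Topology


lemma inv_integral (a b : ℝ) (ha : 0 < a) (hb : 0 < b) :
    ∫ t in (0:ℝ)..(π/2), (a + b * Real.sin t ^ 2)⁻¹ =
    π / (2 * Real.sqrt (a * (a + b))) := by
  set k : ℝ := Real.sqrt ((a+b)/a) with hk_def
  have hk1 : 1 < k := by
    rw [hk_def, show (1:ℝ) = Real.sqrt 1 by simp]
    apply Real.sqrt_lt_sqrt (by norm_num)
    rw [lt_div_iff₀ ha]; linarith
  have hk0 : 0 < k := by linarith
  have hak2 : a * k ^ 2 = a + b := by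
    rw [hk_def, Real.sq_sqrt (by positivity)]
    field_simp
  have hs : Real.sqrt (a * (a + b)) = a * k := by
    rw [← hak2, show a * (a * k^2) = (a*k)^2 by ring, Real.sqrt_sq (by positivity)]
  set H : ℝ → ℝ := fun t =>
    (t + Real.arctan ((k-1) * Real.sin t * Real.cos t /
      (Real.cos t ^ 2 + k * Real.sin t ^ 2))) / (a * k) with hH
  have hderiv : ∀ t ∈ Set.uIcc (0:ℝ) (π/2),
      HasDerivAt H (a + b * Real.sin t ^ 2)⁻¹ t := by
    intro t _
    have e1 : Real.sin t ^ 2 + Real.cos t ^ 2 = 1 := Real.sin_sq_add_cos_sq t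
    have hden : 0 < Real.cos t ^ 2 + k * Real.sin t ^ 2 := by
      nlinarith [sq_nonneg (Real.sin t), sq_nonneg (Real.cos t)]
    have hnum := ((Real.hasDerivAt_sin t).const_mul (k-1)).mul (Real.hasDerivAt_cos t)
    have hdenD := ((Real.hasDerivAt_cos t).pow 2).add (((Real.hasDerivAt_sin t).pow 2).const_mul k)
    have hu := hnum.div hdenD (ne_of_gt hden)
    have hfull := ((hasDerivAt_id t).add hu.arctan).div_const (a * k)
    refine hfull.congr_deriv (Eq.symm ?_)
    simp only [Pi.add_apply, Pi.mul_apply, Pi.div_apply, Pi.pow_apply, id_eq]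
    have hbs : 0 < a + b * Real.sin t ^ 2 := by positivity
    have h1u : 0 < 1 + ((k-1) * Real.sin t * Real.cos t / (Real.cos t ^ 2 + k * Real.sin t ^ 2))^2 := by positivity
    have hE : 0 < 1 + (k^2-1) * Real.sin t^2 := by nlinarith [sq_nonneg (Real.sin t)]
    have hU : 1 + ((k - 1) * Real.sin t * Real.cos t / (Real.cos t ^ 2 + k * Real.sin t ^ 2)) ^ 2 = (1 + (k^2-1)*Real.sin t^2) / (Real.cos t ^ 2 + k * Real.sin t ^ 2) ^ 2 := by
      rw [eq_div_iff (by positivity), add_mul, div_pow, div_mul_cancel₀ _ (by positivity)]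
      linear_combination (Real.cos t^2 + 1 + k^2 * Real.sin t^2) * e1
    rw [hU]
    have hE' : 1 + Real.sin t ^ 2 * (k ^ 2 - 1) ≠ 0 := ne_of_gt (by linarith)
    rw [show b = a * (k ^ 2 - 1) by linarith]
    field_simp
    linear_combination (-(k-1) * (Real.cos t^2 + 1 - k * Real.sin t^2)) * e1
  have hcont : ContinuousOn (fun t => (a + b * Real.sin t ^ 2)⁻¹) (Set.uIcc (0:ℝ) (π/2)) := by
    apply ContinuousOn.inv₀
    · fun_prop
    · intro t _
      have h : 0 ≤ b * Real.sin t ^ 2 := by positivity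
      positivity
  rw [intervalIntegral.integral_eq_sub_of_hasDerivAt hderiv hcont.intervalIntegrable]
  rw [hs, hH]
  simp [Real.cos_pi_div_two, Real.sin_pi_div_two, Real.arctan_zero]
  ring


lemma G_hasDeriv (b : ℝ) (hb : 0 < b) (x : ℝ) (hx : 0 < x) :
    HasDerivAt (fun a => π * Real.log ((Real.sqrt a + Real.sqrt (a + b)) / 2))
      (π / (2 * Real.sqrt (x * (x + b)))) x := by
  have hxb : 0 < x + b := by linarith
  have hsx : 0 < Real.sqrt x := Real.sqrt_pos.2 hx
  have hsxb : 0 < Real.sqrt (x + b) := Real.sqrt_pos.2 hxb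
  have h1 : HasDerivAt Real.sqrt (1 / (2 * Real.sqrt x)) x := Real.hasDerivAt_sqrt hx.ne'
  have h2 : HasDerivAt (fun a : ℝ => Real.sqrt (a + b)) (1 / (2 * Real.sqrt (x + b))) x := by
    have := (Real.hasDerivAt_sqrt hxb.ne').comp x ((hasDerivAt_id x).add_const b)
    simpa [Function.comp_def] using this
  have hsum := ((h1.add h2).div_const 2).log
    (by positivity : (Real.sqrt x + Real.sqrt (x + b)) / 2 ≠ 0)
  have := hsum.const_mul π
  refine this.congr_deriv (Eq.symm ?_)
  simp only [Pi.add_apply]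
  rw [Real.sqrt_mul hx.le]
  field_simp
  ring

lemma F_hasDeriv (b : ℝ) (hb : 0 < b) (x : ℝ) (hx : 0 < x) :
    HasDerivAt (fun a => ∫ t in (0:ℝ)..(π/2), Real.log (a + b * Real.sin t ^ 2))
      (∫ t in (0:ℝ)..(π/2), (x + b * Real.sin t ^ 2)⁻¹) x := by
  have key := intervalIntegral.hasDerivAt_integral_of_dominated_loc_of_deriv_le
    (F := fun a t => Real.log (a + b * Real.sin t ^ 2))
    (F' := fun a t => (a + b * Real.sin t ^ 2)⁻¹)
    (x₀ := x) (a := (0:ℝ)) (b := π/2) (μ := volume)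
    (bound := fun _ => (x/2)⁻¹)
    (Metric.ball_mem_nhds x (by positivity : (0:ℝ) < x/2))
    ?_ ?_ ?_ ?_ ?_ ?_
  · exact key.2
  · filter_upwards with y
    exact ((Real.measurable_log.comp (by measurability)).aestronglyMeasurable)
  · apply ContinuousOn.intervalIntegrable
    apply ContinuousOn.log (by fun_prop)
    intro t _
    have h : 0 ≤ b * Real.sin t ^ 2 := by positivity
    positivity
  · apply Continuous.aestronglyMeasurable
    apply Continuous.inv₀ (by fun_prop)
    intro t
    have h : 0 ≤ b * Real.sin t ^ 2 := by positivity
    positivity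
  · filter_upwards with t _ y hy
    rw [Metric.mem_ball, Real.dist_eq, abs_sub_lt_iff] at hy
    have hy2 : x/2 < y + b * Real.sin t ^ 2 := by nlinarith [sq_nonneg (Real.sin t)]
    rw [Real.norm_eq_abs, abs_inv, abs_of_pos (by linarith)]
    exact inv_anti₀ (by positivity) hy2.le
  · exact intervalIntegrable_const
  · filter_upwards with t _ y hy
    rw [Metric.mem_ball, Real.dist_eq, abs_sub_lt_iff] at hy
    have hy2 : 0 < y + b * Real.sin t ^ 2 := by nlinarith [sq_nonneg (Real.sin t)]
    have := ((hasDerivAt_id y).add_const (b * Real.sin t ^ 2)).log hy2.ne'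
    simpa [one_div] using this

lemma log_int_integrable (b x : ℝ) (hb : 0 < b) (hx : 0 < x) :
    IntervalIntegrable (fun t => Real.log (x + b * Real.sin t ^ 2)) volume 0 (π/2) := by
  apply ContinuousOn.intervalIntegrable
  apply ContinuousOn.log (by fun_prop)
  intro t _
  have h : 0 ≤ b * Real.sin t ^ 2 := by positivity
  positivity

lemma A_tendsto (b : ℝ) (hb : 0 < b) :
    Tendsto (fun x => (∫ t in (0:ℝ)..(π/2), Real.log (x + b * Real.sin t ^ 2))
      - π/2 * Real.log x) atTop (𝓝 0) := by
  have hg : Tendsto (fun x => π/2 * (Real.log (x + b) - Real.log x)) atTop (𝓝 0) := by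
    have h1 : Tendsto (fun x : ℝ => 1 + b / x) atTop (𝓝 1) := by
      simpa using tendsto_const_nhds.add (Tendsto.div_atTop (tendsto_const_nhds (x := b)) tendsto_id)
    have h2 := ((Real.continuousAt_log one_ne_zero).tendsto.comp h1).const_mul (π/2)
    rw [Real.log_one, mul_zero] at h2
    apply h2.congr'
    filter_upwards [eventually_gt_atTop (0:ℝ)] with x hx
    simp only [Function.comp_apply]
    rw [show 1 + b / x = (x + b) / x by field_simp, Real.log_div (by positivity) hx.ne']
  apply tendsto_of_tendsto_of_tendsto_of_le_of_le' tendsto_const_nhds hg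
  · filter_upwards [eventually_gt_atTop (0:ℝ)] with x hx
    rw [sub_nonneg, show π/2 * Real.log x = ∫ t in (0:ℝ)..(π/2), Real.log x by
      simp [mul_comm]]
    apply intervalIntegral.integral_mono_on (by positivity) intervalIntegrable_const
      (log_int_integrable b x hb hx)
    intro t _
    apply Real.log_le_log hx
    nlinarith [sq_nonneg (Real.sin t)]
  · filter_upwards [eventually_gt_atTop (0:ℝ)] with x hx
    rw [mul_sub, sub_le_sub_iff_right, show π/2 * Real.log (x + b) = ∫ t in (0:ℝ)..(π/2), Real.log (x + b) by
      simp [mul_comm]]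
    apply intervalIntegral.integral_mono_on (by positivity) (log_int_integrable b x hb hx)
      intervalIntegrable_const
    intro t _
    apply Real.log_le_log (by nlinarith [sq_nonneg (Real.sin t)])
    nlinarith [Real.sin_sq_le_one t]

lemma B_tendsto (b : ℝ) (hb : 0 < b) :
    Tendsto (fun x => π * Real.log ((Real.sqrt x + Real.sqrt (x + b)) / 2)
      - π/2 * Real.log x) atTop (𝓝 0) := by
  have h1 : Tendsto (fun x : ℝ => 1 + b / x) atTop (𝓝 1) := by
    simpa using tendsto_const_nhds.add (Tendsto.div_atTop (tendsto_const_nhds (x := b)) tendsto_id)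
  have h2 : ContinuousAt (fun u : ℝ => π * Real.log ((1 + Real.sqrt u) / 2)) 1 := by
    apply ContinuousAt.mul continuousAt_const
    apply ContinuousAt.log
    · fun_prop
    · norm_num [Real.sqrt_one]
  have h3 := h2.tendsto.comp h1
  norm_num [Real.sqrt_one] at h3
  apply h3.congr'
  filter_upwards [eventually_gt_atTop (0:ℝ)] with x hx
  have hxb : 0 < x + b := by linarith
  have hsx : 0 < Real.sqrt x := Real.sqrt_pos.2 hx
  have hsxb : 0 < Real.sqrt (x + b) := Real.sqrt_pos.2 hxb
  have e1 : Real.sqrt (1 + b / x) = Real.sqrt (x + b) / Real.sqrt x := by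
    rw [show 1 + b / x = (x + b) / x by field_simp, Real.sqrt_div hxb.le]
  simp only [Function.comp_apply, e1]
  rw [show (1 + Real.sqrt (x + b) / Real.sqrt x) / 2
      = ((Real.sqrt x + Real.sqrt (x + b)) / 2) / Real.sqrt x by field_simp,
    Real.log_div (by positivity) hsx.ne', Real.log_sqrt hx.le]
  ring

theorem log_sin_sq_integral (a b : ℝ) (ha : 0 < a) (hb : 0 < b) :
    ∫ t in (0 : ℝ)..(π / 2), Real.log (a + b * Real.sin t ^ 2) =
    π * Real.log ((Real.sqrt a + Real.sqrt (a + b)) / 2) := by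
  set φ : ℝ → ℝ := fun x => (∫ t in (0:ℝ)..(π/2), Real.log (x + b * Real.sin t ^ 2))
    - π * Real.log ((Real.sqrt x + Real.sqrt (x + b)) / 2) with hφ
  have hd : ∀ x, 0 < x → HasDerivAt φ 0 x := by
    intro x hx
    have h := (F_hasDeriv b hb x hx).sub (G_hasDeriv b hb x hx)
    rwa [inv_integral x b hx hb, sub_self] at h
  have hconst : ∀ x, a ≤ x → φ x = φ a := by
    intro x hax
    rcases eq_or_lt_of_le hax with rfl | hax
    · rfl
    obtain ⟨c, hc, hceq⟩ := exists_hasDerivAt_eq_slope φ (fun _ => 0) hax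
      (fun y hy => (hd y (lt_of_lt_of_le ha hy.1)).continuousAt.continuousWithinAt)
      (fun y hy => hd y (lt_trans ha hy.1))
    have hne : x - a ≠ 0 := by linarith
    field_simp at hceq
    linarith [hceq.symm]
  have hlim : Tendsto φ atTop (𝓝 0) := by
    have := (A_tendsto b hb).sub (B_tendsto b hb)
    rw [sub_zero] at this
    apply this.congr
    intro x; simp only [hφ]; ring
  have : φ a = 0 := by
    have h1 : Tendsto (fun _ : ℝ => φ a) atTop (𝓝 0) := by
      apply hlim.congr'
      filter_upwards [eventually_ge_atTop a] with x hx
      exact hconst x hx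
    exact tendsto_nhds_unique tendsto_const_nhds h1
  have := this
  rw [hφ] at this
  linarith [this]
end
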